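/- Let a > 1, q > 0, T ≥ 1, and let w : ℕ → ℝ be any disturbance sequence. For any k ∈ ℝ with |a − k| < 1, let cost(LC) := Σ_{t=0}^T (q + k²)·x_t² be the cost of the linear controller u_t = −k·x_t (with x_0 = 0, x_{t+1} = (a − k)·x_t + w_t), and let cost(OPT) := inf over all control sequences u_0, …, u_T of Σ_{t=0}^T (q·x_t² + u_t²) subject to x_0 = 0 and x_{t+1} = a·x_t + u_t + w_t. Then cost(LC) ≥ ((q + (a − 1)²)/4) · cost(OPT). -/

import Mathlib

/-!
Comparing with the offline controller that cancels every disturbance, `u_t = -w_t` for `t < T`,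
gives `cost(OPT) ≤ ∑_{t<T} w_t²`. In closed loop `w_t = x_{t+1} - (a - k) x_t` with `|a - k| < 1`,
so `w_t² ≤ 2 x_{t+1}² + 2 x_t²` and `∑_{t<T} w_t² ≤ 4 ∑_{t≤T} x_t²`. Finally `k > a - 1 > 0`
gives `q + k² ≥ q + (a - 1)²`.
-/

open Finset

namespace ScalarLQ

def trajectory (a : ℝ) (u w : ℕ → ℝ) : ℕ → ℝ
  | 0 => 0
  | t + 1 => a * trajectory a u w t + u t + w t

def costs (a q : ℝ) (w : ℕ → ℝ) (T : ℕ) : Set ℝ :=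
  { r | ∃ u x : ℕ → ℝ, x 0 = 0 ∧ (∀ t, x (t + 1) = a * x t + u t + w t) ∧
    r = ∑ t ∈ range (T + 1), (q * x t ^ 2 + u t ^ 2) }

lemma trajectory_mem_costs (a q : ℝ) (u w : ℕ → ℝ) (T : ℕ) :
    ∑ t ∈ range (T + 1), (q * trajectory a u w t ^ 2 + u t ^ 2) ∈ costs a q w T :=
  ⟨u, trajectory a u w, rfl, fun _ => rfl, rfl⟩

lemma bddBelow_costs {q : ℝ} (hq : 0 ≤ q) (a : ℝ) (w : ℕ → ℝ) (T : ℕ) :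
    BddBelow (costs a q w T) := by
  refine ⟨0, ?_⟩
  rintro r ⟨u, x, -, -, rfl⟩
  exact sum_nonneg fun t _ => by positivity

def cancelling (w : ℕ → ℝ) (T : ℕ) (t : ℕ) : ℝ := if t < T then -w t else 0

lemma trajectory_cancelling_of_le (a : ℝ) (w : ℕ → ℝ) {T t : ℕ} (ht : t ≤ T) :
    trajectory a (cancelling w T) w t = 0 := by
  induction t with
  | zero => rfl
  | succ t ih =>
    have htT : t < T := ht
    simp [trajectory, ih htT.le, cancelling, htT]

lemma sInf_costs_le_sum_sq {q : ℝ} (hq : 0 ≤ q) (a : ℝ) (w : ℕ → ℝ) (T : ℕ) :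
    sInf (costs a q w T) ≤ ∑ t ∈ range T, w t ^ 2 := by
  have hcost : ∑ t ∈ range (T + 1),
      (q * trajectory a (cancelling w T) w t ^ 2 + cancelling w T t ^ 2) =
      ∑ t ∈ range T, w t ^ 2 := by
    have hstage : ∀ t ∈ range T,
        q * trajectory a (cancelling w T) w t ^ 2 + cancelling w T t ^ 2 = w t ^ 2 := by
      intro t ht
      have htT : t < T := mem_range.1 ht
      simp [trajectory_cancelling_of_le a w htT.le, cancelling, htT]
    rw [sum_range_succ, sum_congr rfl hstage]
    simp [trajectory_cancelling_of_le a w le_rfl, cancelling]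
  rw [← hcost]
  exact csInf_le (bddBelow_costs hq a w T) (trajectory_mem_costs _ _ _ _ _)

lemma sq_le_two_mul_sq_add_two_mul_sq {c : ℝ} (hc : |c| ≤ 1) (y z : ℝ) :
    (y - c * z) ^ 2 ≤ 2 * y ^ 2 + 2 * z ^ 2 := by
  have hc2 : c ^ 2 ≤ 1 := by
    rw [← sq_abs]
    exact pow_le_one₀ (abs_nonneg c) hc
  nlinarith [add_sq_le (a := y) (b := -(c * z)), mul_le_mul_of_nonneg_right hc2 (sq_nonneg z)]

lemma sum_sq_le_four_mul_sum_sq {c : ℝ} (hc : |c| ≤ 1) {x w : ℕ → ℝ} (hx0 : x 0 = 0)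
    (hx : ∀ t, x (t + 1) = c * x t + w t) (T : ℕ) :
    ∑ t ∈ range T, w t ^ 2 ≤ 4 * ∑ t ∈ range (T + 1), x t ^ 2 := by
  have hshift : ∑ t ∈ range T, x (t + 1) ^ 2 = ∑ t ∈ range (T + 1), x t ^ 2 := by
    simp [sum_range_succ' (fun t => x t ^ 2) T, hx0]
  have hinit : ∑ t ∈ range T, x t ^ 2 ≤ ∑ t ∈ range (T + 1), x t ^ 2 :=
    sum_le_sum_of_subset_of_nonneg (range_subset_range.2 T.le_succ) fun _ _ _ => sq_nonneg _
  calc ∑ t ∈ range T, w t ^ 2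
      ≤ ∑ t ∈ range T, (2 * x (t + 1) ^ 2 + 2 * x t ^ 2) := by
        refine sum_le_sum fun t _ => ?_
        rw [show w t = x (t + 1) - c * x t by rw [hx t]; ring]
        exact sq_le_two_mul_sq_add_two_mul_sq hc _ _
    _ = 2 * ∑ t ∈ range T, x (t + 1) ^ 2 + 2 * ∑ t ∈ range T, x t ^ 2 := by
        rw [sum_add_distrib, mul_sum, mul_sum]
    _ ≤ 4 * ∑ t ∈ range (T + 1), x t ^ 2 := by linarith

lemma sq_sub_one_le_sq_of_abs_sub_lt {a k : ℝ} (ha : 1 ≤ a) (hk : |a - k| < 1) :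
    (a - 1) ^ 2 ≤ k ^ 2 := by
  have hak : a - 1 < k := by linarith [(abs_lt.1 hk).2]
  exact pow_le_pow_left₀ (sub_nonneg.2 ha) hak.le 2

end ScalarLQ

open ScalarLQ in
theorem stmt19 (a q k : ℝ) (ha : 1 < a) (hq : 0 < q) (hk : |a - k| < 1)
    (T : ℕ) (w : ℕ → ℝ)
    (x : ℕ → ℝ) (hx0 : x 0 = 0) (hxrec : ∀ t : ℕ, x (t + 1) = (a - k) * x t + w t)
    (costLC : ℝ)
    (hLC : costLC = ∑ t ∈ Finset.range (T + 1), (q + k ^ 2) * x t ^ 2)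
    (costOPT : ℝ)
    (hOPT : costOPT = sInf { r : ℝ | ∃ u x' : ℕ → ℝ, x' 0 = 0 ∧
      (∀ t : ℕ, x' (t + 1) = a * x' t + u t + w t) ∧
      r = ∑ t ∈ Finset.range (T + 1), (q * x' t ^ 2 + u t ^ 2) }) :
    costLC ≥ (q + (a - 1) ^ 2) / 4 * costOPT := by
  set S := ∑ t ∈ range (T + 1), x t ^ 2
  have hOPT_le : costOPT ≤ 4 * S :=
    hOPT ▸ (sInf_costs_le_sum_sq hq.le a w T).trans
      (sum_sq_le_four_mul_sum_sq hk.le hx0 hxrec T)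
  have hk_sq : (a - 1) ^ 2 ≤ k ^ 2 := sq_sub_one_le_sq_of_abs_sub_lt ha.le hk
  have hLC_eq : costLC = (q + k ^ 2) * S := by rw [hLC, mul_sum]
  have hS : 0 ≤ S := sum_nonneg fun t _ => sq_nonneg _
  calc (q + (a - 1) ^ 2) / 4 * costOPT
      ≤ (q + (a - 1) ^ 2) / 4 * (4 * S) := by gcongr
    _ = (q + (a - 1) ^ 2) * S := by ring
    _ ≤ (q + k ^ 2) * S := by gcongr
    _ = costLC := hLC_eq.symm
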